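/- arXiv:1310.3123 — 4 statements merged into one kernel-verified Lean document; each statement's English description precedes it below -/
import Mathlib

section
/- In the braid group B_n, the Birman–Ko–Lee elements σ_{ij} = (σ_{j-2}⋯σ_i)^{-1} σ_{j-1} (σ_{j-2}⋯σ_i), for 1 ≤ i < j ≤ n, satisfy σ_{st}σ_{rs} = σ_{rt}σ_{st} for all 1 ≤ r < s < t ≤ n. -/
/-- The descending product `σ_{j-2} σ_{j-3} ⋯ σ_i` (empty product when `j = i+1`). -/
def artinChain {G : Type*} [Group G] (σ : ℕ → G) (i j : ℕ) : G :=
  (((List.range' i (j - 1 - i)).reverse).map σ).prod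

/-- The Birman–Ko–Lee band generator `σ_{ij} = (σ_{j-2}⋯σ_i)⁻¹ σ_{j-1} (σ_{j-2}⋯σ_i)`. -/
def bkl {G : Type*} [Group G] (σ : ℕ → G) (i j : ℕ) : G :=
  (artinChain σ i j)⁻¹ * σ (j - 1) * artinChain σ i j

/-- The Artin braid relations for the generators `σ_1, …, σ_{n-1}`. -/
def BraidRels {G : Type*} [Group G] (σ : ℕ → G) (n : ℕ) : Prop :=
  (∀ i, 1 ≤ i → i + 1 ≤ n - 1 →
      σ i * σ (i + 1) * σ i = σ (i + 1) * σ i * σ (i + 1)) ∧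
  (∀ i j, 1 ≤ i → i ≤ n - 1 → 1 ≤ j → j ≤ n - 1 → i + 1 < j →
      σ i * σ j = σ j * σ i)

lemma artinChain_succ {G : Type*} [Group G] (σ : ℕ → G) (i j : ℕ) (hij : i < j) :
    artinChain σ i (j + 1) = σ (j - 1) * artinChain σ i j := by
  unfold artinChain
  rw [show j + 1 - 1 - i = (j - 1 - i) + 1 by omega, List.range'_concat]
  simp only [List.reverse_append, List.reverse_cons, List.reverse_nil, List.nil_append,
    List.singleton_append, List.map_cons, List.prod_cons]
  rw [show i + 1 * (j - 1 - i) = j - 1 by omega]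

lemma bkl_self_succ {G : Type*} [Group G] (σ : ℕ → G) (i : ℕ) :
    bkl σ i (i + 1) = σ i := by
  simp [bkl, artinChain]

lemma commute_chain {G : Type*} [Group G] (σ : ℕ → G) (t i j : ℕ)
    (hk : ∀ k, i ≤ k → k + 1 < j → Commute (σ t) (σ k)) :
    Commute (σ t) (artinChain σ i j) := by
  apply Commute.list_prod_right
  intro y hy
  simp only [List.mem_map, List.mem_reverse, List.mem_range'_1] at hy
  obtain ⟨k, hk', rfl⟩ := hy
  exact hk k (by omega) (by omega)

lemma commute_bkl {G : Type*} [Group G] (σ : ℕ → G) (t i j : ℕ) (hij : i < j)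
    (hk : ∀ k, i ≤ k → k < j → Commute (σ t) (σ k)) :
    Commute (σ t) (bkl σ i j) := by
  have hchain : Commute (σ t) (artinChain σ i j) :=
    commute_chain σ t i j (fun k h1 h2 => hk k h1 (by omega))
  exact (hchain.inv_right.mul_right (hk (j - 1) (by omega) (by omega))).mul_right hchain

lemma bkl_succ {G : Type*} [Group G] {n : ℕ} {σ : ℕ → G} (h : BraidRels σ n)
    (i t : ℕ) (h1 : 1 ≤ i) (h2 : i < t) (h3 : t ≤ n - 1) :
    bkl σ i (t + 1) = σ t * bkl σ i t * (σ t)⁻¹ := by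
  have hb : σ (t - 1) * σ t * σ (t - 1) = σ t * σ (t - 1) * σ t := by
    have := h.1 (t - 1) (by omega) (by omega)
    rwa [show t - 1 + 1 = t by omega] at this
  have hc : Commute (σ t) (artinChain σ i t) := by
    apply commute_chain σ t i t
    intro k hk1 hk2
    exact (h.2 k t (by omega) (by omega) (by omega) (by omega) (by omega)).symm
  have key : (σ (t-1))⁻¹ * σ t * σ (t-1) = σ t * σ (t-1) * (σ t)⁻¹ := by
    apply mul_left_cancel (a := σ (t-1))
    calc σ (t-1) * ((σ (t-1))⁻¹ * σ t * σ (t-1)) = σ t * σ (t-1) := by group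
    _ = σ (t-1) * σ t * σ (t-1) * (σ t)⁻¹ := by rw [hb]; group
    _ = σ (t-1) * (σ t * σ (t-1) * (σ t)⁻¹) := by group
  set A := artinChain σ i t with hA
  have e1 : σ t * A⁻¹ = A⁻¹ * σ t := hc.inv_right.eq
  have e2 : (σ t)⁻¹ * A = A * (σ t)⁻¹ := hc.inv_left.eq
  unfold bkl
  rw [artinChain_succ σ i t h2, show t + 1 - 1 = t by omega, ← hA]
  calc (σ (t-1) * A)⁻¹ * σ t * (σ (t-1) * A)
      = A⁻¹ * ((σ (t-1))⁻¹ * σ t * σ (t-1)) * A := by group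
    _ = A⁻¹ * (σ t * σ (t-1) * (σ t)⁻¹) * A := by rw [key]
    _ = (A⁻¹ * σ t) * σ (t-1) * ((σ t)⁻¹ * A) := by group
    _ = (σ t * A⁻¹) * σ (t-1) * (A * (σ t)⁻¹) := by rw [e1, e2]
    _ = σ t * (A⁻¹ * σ (t-1) * A) * (σ t)⁻¹ := by group

/-- In the braid group `B_n`, the BKL elements satisfy
`σ_{st} σ_{rs} = σ_{rt} σ_{st}` for all `1 ≤ r < s < t ≤ n`. -/
theorem bkl_band_relation_left {G : Type*} [Group G] (n : ℕ) (σ : ℕ → G)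
    (h : BraidRels σ n) :
    ∀ r s t, 1 ≤ r → r < s → s < t → t ≤ n →
      bkl σ s t * bkl σ r s = bkl σ r t * bkl σ s t := by
  have main : ∀ t r s, 1 ≤ r → r < s → s < t → t ≤ n →
      bkl σ s t * bkl σ r s = bkl σ r t * bkl σ s t := by
    intro t
    induction t with
    | zero => intro r s _ _ hst; omega
    | succ t ih =>
      intro r s hr hrs hst htn
      rcases Nat.lt_or_ge s t with hlt | hge
      · -- inductive step: s < t, so t ≥ s + 1 and we conjugate by σ t
        have hrt : bkl σ r (t + 1) = σ t * bkl σ r t * (σ t)⁻¹ :=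
          bkl_succ h r t hr (by omega) (by omega)
        have hst' : bkl σ s (t + 1) = σ t * bkl σ s t * (σ t)⁻¹ :=
          bkl_succ h s t (by omega) hlt (by omega)
        have hcomm : Commute (σ t) (bkl σ r s) := by
          apply commute_bkl σ t r s hrs
          intro k hk1 hk2
          exact (h.2 k t (by omega) (by omega) (by omega) (by omega) (by omega)).symm
        have e : (σ t)⁻¹ * bkl σ r s = bkl σ r s * (σ t)⁻¹ := hcomm.inv_left.eq
        have IH := ih r s hr hrs hlt (by omega)
        rw [hrt, hst']
        calc σ t * bkl σ s t * (σ t)⁻¹ * bkl σ r s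
            = σ t * bkl σ s t * ((σ t)⁻¹ * bkl σ r s) := by group
          _ = σ t * bkl σ s t * (bkl σ r s * (σ t)⁻¹) := by rw [e]
          _ = σ t * (bkl σ s t * bkl σ r s) * (σ t)⁻¹ := by group
          _ = σ t * (bkl σ r t * bkl σ s t) * (σ t)⁻¹ := by rw [IH]
          _ = (σ t * bkl σ r t * (σ t)⁻¹) * (σ t * bkl σ s t * (σ t)⁻¹) := by group
      · -- base case: t = s
        have hts : t = s := by omega
        subst hts
        have hrt : bkl σ r (t + 1) = σ t * bkl σ r t * (σ t)⁻¹ :=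
          bkl_succ h r t hr hrs (by omega)
        rw [bkl_self_succ, hrt]
        group
  intro r s t hr hrs hst htn
  exact main t r s hr hrs hst htn
end

section
/- In the braid group B_n, the Birman–Ko–Lee elements σ_{ij} satisfy σ_{rt}σ_{st} = σ_{rs}σ_{rt} for all 1 ≤ r < s < t ≤ n. -/
section GroupIdentities

variable {G : Type*} [Group G] {a b c : G}

lemma braid_conj_of_commute (hac : Commute a c) (hab : a * b * a = b * a * b) :
    a * (c⁻¹ * b * c) * a = (c⁻¹ * b * c) * a * (c⁻¹ * b * c) := by
  have ha : c⁻¹ * a * c = a := by rw [mul_assoc, hac.eq, inv_mul_cancel_left]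
  calc a * (c⁻¹ * b * c) * a = (c⁻¹ * a * c) * (c⁻¹ * b * c) * (c⁻¹ * a * c) := by rw [ha]
    _ = c⁻¹ * (b * a * b) * c := by rw [← hab]; group
    _ = (c⁻¹ * b * c) * (c⁻¹ * a * c) * (c⁻¹ * b * c) := by group
    _ = (c⁻¹ * b * c) * a * (c⁻¹ * b * c) := by rw [ha]

lemma conj_mul_eq_mul_conj_of_braid (hab : a * b * a = b * a * b) :
    (a * b * a⁻¹) * a = b * (a * b * a⁻¹) := by
  calc (a * b * a⁻¹) * a = a * b * a * a⁻¹ := by group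
    _ = b * (a * b * a⁻¹) := by rw [hab]; group

lemma inv_conj_eq_conj_of_braid (hab : a * b * a = b * a * b) :
    a⁻¹ * b * a = b * a * b⁻¹ := by
  calc a⁻¹ * b * a = a⁻¹ * (b * a * b) * b⁻¹ * a⁻¹ * a := by group
    _ = b * a * b⁻¹ := by rw [← hab]; group

end GroupIdentities

section BKL

variable {G : Type*} [Group G] {σ : ℕ → G} {n i j k : ℕ}

lemma artinChain_succ_self (σ : ℕ → G) (i : ℕ) : artinChain σ i (i + 1) = 1 := by
  simp [artinChain]

lemma artinChain_succ_right (σ : ℕ → G) (hij : i < j) :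
    artinChain σ i (j + 1) = σ (j - 1) * artinChain σ i j := by
  rw [artinChain, artinChain, show j + 1 - 1 - i = j - 1 - i + 1 by omega, List.range'_concat,
    show i + 1 * (j - 1 - i) = j - 1 by omega]
  simp

lemma Commute.artinChain_right {g : G} (hg : ∀ x, i ≤ x → x + 2 ≤ j → Commute g (σ x)) :
    Commute g (artinChain σ i j) := by
  refine Commute.list_prod_right _ _ fun y hy => ?_
  simp only [List.mem_map, List.mem_reverse, List.mem_range'_1] at hy
  obtain ⟨x, ⟨hix, hxj⟩, rfl⟩ := hy
  exact hg x hix (by omega)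

lemma bkl_succ_self (σ : ℕ → G) (i : ℕ) : bkl σ i (i + 1) = σ i := by
  simp [bkl, artinChain_succ_self]

lemma BraidRels.commute (h : BraidRels σ n) (hi : 1 ≤ i) (hij : i + 1 < j) (hjn : j + 1 ≤ n) :
    Commute (σ i) (σ j) :=
  h.2 i j hi (by omega) (by omega) (by omega) hij

lemma BraidRels.commute_artinChain (h : BraidRels σ n) (hi : 1 ≤ i) (hjk : j ≤ k)
    (hkn : k + 1 ≤ n) : Commute (σ k) (artinChain σ i j) :=
  Commute.artinChain_right fun x hix hxj => (h.commute (i := x) (by omega) (by omega) hkn).symm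

lemma BraidRels.bkl_succ_right (h : BraidRels σ n) (hi : 1 ≤ i) (hij : i < j)
    (hjn : j + 1 ≤ n) : bkl σ i (j + 1) = σ j * bkl σ i j * (σ j)⁻¹ := by
  obtain ⟨k, rfl⟩ : ∃ k, j = k + 1 := ⟨j - 1, by omega⟩
  set A := artinChain σ i (k + 1)
  have hA : Commute (σ (k + 1)) A := h.commute_artinChain hi le_rfl hjn
  have hconj := inv_conj_eq_conj_of_braid (h.1 k (by omega) (by omega))
  simp only [bkl, artinChain_succ_right σ hij, Nat.add_sub_cancel]
  calc (σ k * A)⁻¹ * σ (k + 1) * (σ k * A) = A⁻¹ * ((σ k)⁻¹ * σ (k + 1) * σ k) * A := by group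
    _ = (A⁻¹ * σ (k + 1)) * σ k * ((σ (k + 1))⁻¹ * A) := by rw [hconj]; group
    _ = σ (k + 1) * (A⁻¹ * σ k * A) * (σ (k + 1))⁻¹ := by
        rw [← hA.inv_right.eq, hA.inv_left.eq]; group

lemma BraidRels.commute_bkl (h : BraidRels σ n) (hi : 1 ≤ i) (hij : i < j) (hjk : j < k)
    (hkn : k + 1 ≤ n) : Commute (σ k) (bkl σ i j) := by
  have hA := h.commute_artinChain (j := j) hi hjk.le hkn
  exact (hA.inv_right.mul_right (h.commute (i := j - 1) (by omega) (by omega) hkn).symm).mul_right hA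

lemma BraidRels.braid_bkl (h : BraidRels σ n) (hi : 1 ≤ i) (hij : i < j) (hjn : j + 1 ≤ n) :
    σ j * bkl σ i j * σ j = bkl σ i j * σ j * bkl σ i j := by
  have hbraid := h.1 (j - 1) (by omega) (by omega)
  rw [Nat.sub_add_cancel (by omega)] at hbraid
  exact braid_conj_of_commute (h.commute_artinChain hi le_rfl hjn) hbraid.symm

end BKL

/-- In the braid group `B_n`, the BKL elements satisfy
`σ_{rt} σ_{st} = σ_{rs} σ_{rt}` for all `1 ≤ r < s < t ≤ n`. -/
theorem bkl_band_relation_right {G : Type*} [Group G] (n : ℕ) (σ : ℕ → G)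
    (h : BraidRels σ n) :
    ∀ r s t, 1 ≤ r → r < s → s < t → t ≤ n →
      bkl σ r t * bkl σ s t = bkl σ r s * bkl σ r t := by
  intro r s t hr hrs hst htn
  induction t, hst using Nat.le_induction with
  | base =>
    rw [h.bkl_succ_right hr hrs htn, bkl_succ_self]
    exact conj_mul_eq_mul_conj_of_braid (h.braid_bkl hr hrs htn)
  | succ t hst ih =>
    have hcomm : Commute (σ t) (bkl σ r s) := h.commute_bkl hr hrs hst htn
    rw [h.bkl_succ_right hr (by omega) htn, h.bkl_succ_right (by omega) hst htn]
    calc σ t * bkl σ r t * (σ t)⁻¹ * (σ t * bkl σ s t * (σ t)⁻¹)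
        = σ t * (bkl σ r t * bkl σ s t) * (σ t)⁻¹ := by group
      _ = bkl σ r s * (σ t * bkl σ r t * (σ t)⁻¹) := by
        rw [ih (by omega), ← mul_assoc, ← mul_assoc, hcomm.eq]; group
end

section
/- In the braid group B_n, the Birman–Ko–Lee elements satisfy σ_{st}σ_{qr} = σ_{qr}σ_{st} whenever (t-r)(t-q)(s-r)(s-q) > 0, i.e., whenever the pairs {q,r} and {s,t} are either disjoint and non-interleaved, or nested. -/
namespace BKLAux

variable {G : Type*} [Group G]

/-- Conjugation `x ↦ a⁻¹ x a` as a monoid hom. -/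
def conjHom (a : G) : G →* G where
  toFun x := a⁻¹ * x * a
  map_one' := by group
  map_mul' x y := by group

lemma conjHom_apply (a x : G) : conjHom a x = a⁻¹ * x * a := rfl

lemma conjHom_mul (a b x : G) : conjHom (a * b) x = conjHom b (conjHom a x) := by
  simp only [conjHom_apply, mul_inv_rev]; group

lemma conjHom_of_commute {a x : G} (h : Commute a x) : conjHom a x = x := by
  rw [conjHom_apply, mul_assoc, ← h.eq, ← mul_assoc, inv_mul_cancel, one_mul]

/-- The descending chain `σ_{i+m-1} ⋯ σ_i`. -/
def dchain (σ : ℕ → G) (i m : ℕ) : G := (((List.range' i m).reverse).map σ).prod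

lemma artinChain_eq (σ : ℕ → G) (i j : ℕ) : artinChain σ i j = dchain σ i (j - 1 - i) := rfl

lemma dchain_succ (σ : ℕ → G) (i m : ℕ) :
    dchain σ i (m + 1) = σ (i + m) * dchain σ i m := by
  simp [dchain, List.range'_concat]

lemma commute_dchain {σ : ℕ → G} {x : G} {i m : ℕ}
    (h : ∀ k, i ≤ k → k < i + m → Commute x (σ k)) :
    Commute x (dchain σ i m) := by
  apply Commute.list_prod_right
  intro y hy
  simp only [List.mem_map, List.mem_reverse, List.mem_range'_1] at hy
  obtain ⟨k, hk, rfl⟩ := hy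
  exact h k hk.1 hk.2

lemma dchain_conj_shift {σ : ℕ → G} {n : ℕ} (hb : BraidRels σ n) :
    ∀ m k i, 1 ≤ i → i ≤ k → k + 2 ≤ i + m → i + m ≤ n →
      conjHom (dchain σ i m) (σ k) = σ (k + 1) := by
  intro m
  induction m with
  | zero => intro k i _ _ hk _; omega
  | succ m ih =>
    intro k i hi hik hk hn
    rw [dchain_succ, conjHom_mul]
    rcases Nat.lt_or_ge (k + 2) (i + m + 1) with hlt | hge
    · -- far: k + 2 ≤ i + m
      have hc : Commute (σ (i + m)) (σ k) :=
        (hb.2 k (i + m) (by omega) (by omega) (by omega) (by omega) (by omega)).symm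
      rw [conjHom_of_commute hc]
      exact ih k i hi hik (by omega) (by omega)
    · -- k + 1 = i + m
      have hkm : i + m = k + 1 := by omega
      have hm : 1 ≤ m := by omega
      obtain ⟨m', rfl⟩ : ∃ m', m = m' + 1 := ⟨m - 1, by omega⟩
      have hkm' : i + m' = k := by omega
      have b := hb.1 k (by omega) (by omega)
      rw [hkm, dchain_succ, conjHom_mul, hkm']
      have step1 : conjHom (σ (k + 1)) (σ k) = σ k * σ (k + 1) * (σ k)⁻¹ := by
        rw [conjHom_apply]
        calc (σ (k+1))⁻¹ * σ k * σ (k+1)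
            = (σ (k+1))⁻¹ * (σ k * σ (k+1) * σ k) * (σ k)⁻¹ := by group
          _ = (σ (k+1))⁻¹ * (σ (k+1) * σ k * σ (k+1)) * (σ k)⁻¹ := by rw [b]
          _ = σ k * σ (k + 1) * (σ k)⁻¹ := by group
      rw [step1]
      have step2 : conjHom (σ k) (σ k * σ (k + 1) * (σ k)⁻¹) = σ (k + 1) := by
        rw [conjHom_apply]; group
      rw [step2]
      apply conjHom_of_commute
      apply Commute.symm
      apply commute_dchain
      intro j hj1 hj2
      exact (hb.2 j (k + 1) (by omega) (by omega) (by omega) (by omega) (by omega)).symm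

lemma conj_dchain {σ : ℕ → G} {a : G} {i m : ℕ}
    (h : ∀ k, i ≤ k → k < i + m → conjHom a (σ k) = σ (k + 1)) :
    conjHom a (dchain σ i m) = dchain σ (i + 1) m := by
  unfold dchain
  rw [map_list_prod]
  congr 1
  have hr : List.range' (i + 1) m = (List.range' i m).map (fun x => 1 + x) := by
    rw [List.map_add_range', Nat.add_comm]
  rw [List.map_map, hr, List.map_reverse, List.map_reverse, List.map_map]
  congr 1
  apply List.map_congr_left
  intro k hk
  simp only [List.mem_range'_1] at hk
  simp only [Function.comp_apply]
  rw [h k hk.1 hk.2, Nat.add_comm 1 k]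

lemma conj_bkl {σ : ℕ → G} {a : G} {u v : ℕ} (huv : u < v) (hu : 1 ≤ u)
    (h : ∀ k, u ≤ k → k < v → conjHom a (σ k) = σ (k + 1)) :
    conjHom a (bkl σ u v) = bkl σ (u + 1) (v + 1) := by
  unfold bkl
  rw [map_mul, map_mul, map_inv, artinChain_eq, artinChain_eq]
  have h1 : conjHom a (dchain σ u (v - 1 - u)) = dchain σ (u + 1) (v - 1 - u) :=
    conj_dchain (fun k hk1 hk2 => h k hk1 (by omega))
  have h2 : v - 1 - u = v + 1 - 1 - (u + 1) := by omega
  have h3 : v - 1 + 1 = v + 1 - 1 := by omega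
  rw [h1, h (v - 1) (by omega) (by omega), h2, h3]

lemma commute_bkl {σ : ℕ → G} {x : G} {u v : ℕ} (huv : u < v)
    (h : ∀ k, u ≤ k → k < v → Commute x (σ k)) :
    Commute x (bkl σ u v) := by
  unfold bkl
  rw [artinChain_eq]
  have hc : Commute x (dchain σ u (v - 1 - u)) :=
    commute_dchain (fun k h1 h2 => h k h1 (by omega))
  exact (hc.inv_right.mul_right (h (v - 1) (by omega) (by omega))).mul_right hc

lemma bkl_comm_disjoint {σ : ℕ → G} {n q r s t : ℕ} (hb : BraidRels σ n)
    (hs1 : 1 ≤ s) (hst : s < t) (htq : t < q) (hqr : q < r) (hrn : r ≤ n) :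
    Commute (bkl σ s t) (bkl σ q r) := by
  apply commute_bkl hqr
  intro m hm1 hm2
  apply Commute.symm
  apply commute_bkl hst
  intro k hk1 hk2
  exact (hb.2 k m (by omega) (by omega) (by omega) (by omega) (by omega)).symm

lemma bkl_comm_nested {σ : ℕ → G} {n q r s t : ℕ} (hb : BraidRels σ n)
    (hq1 : 1 ≤ q) (hqs : q < s) (hst : s < t) (htr : t < r) (hrn : r ≤ n) :
    Commute (bkl σ s t) (bkl σ q r) := by
  set A : G := dchain σ q (r - 1 - q) with hA
  have hgen : ∀ k, q ≤ k → k + 2 ≤ r - 1 → conjHom A (σ k) = σ (k + 1) := by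
    intro k hk1 hk2
    exact dchain_conj_shift hb (r - 1 - q) k q hq1 hk1 (by omega) (by omega)
  have hb1 : conjHom A (bkl σ (s - 1) (t - 1)) = bkl σ s t := by
    have := conj_bkl (a := A) (u := s - 1) (v := t - 1) (by omega) (by omega)
      (fun k hk1 hk2 => hgen k (by omega) (by omega))
    rwa [show s - 1 + 1 = s by omega, show t - 1 + 1 = t by omega] at this
  have hb2 : bkl σ q r = conjHom A (σ (r - 1)) := rfl
  have hinner : Commute (bkl σ (s - 1) (t - 1)) (σ (r - 1)) := by
    apply Commute.symm
    apply commute_bkl (by omega : s - 1 < t - 1)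
    intro k hk1 hk2
    exact (hb.2 k (r - 1) (by omega) (by omega) (by omega) (by omega) (by omega)).symm
  have := hinner.map (conjHom A)
  rwa [hb1, ← hb2] at this

end BKLAux

open BKLAux in
/-- In the braid group `B_n`, the BKL elements satisfy `σ_{st} σ_{qr} = σ_{qr} σ_{st}`
whenever `(t-r)(t-q)(s-r)(s-q) > 0`, i.e. whenever the pairs `{q,r}` and `{s,t}` are
either disjoint and non-interleaved, or nested. -/
theorem bkl_commuting_relation {G : Type*} [Group G] (n : ℕ) (σ : ℕ → G)
    (h : BraidRels σ n) :
    ∀ q r s t, 1 ≤ q → q < r → r ≤ n → 1 ≤ s → s < t → t ≤ n →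
      ((t : ℤ) - (r : ℤ)) * ((t : ℤ) - (q : ℤ)) *
        ((s : ℤ) - (r : ℤ)) * ((s : ℤ) - (q : ℤ)) > 0 →
      bkl σ s t * bkl σ q r = bkl σ q r * bkl σ s t := by
  intro q r s t hq1 hqr hrn hs1 hst htn hsign
  rcases lt_trichotomy t q with h1 | h1 | h1
  · exact bkl_comm_disjoint h hs1 hst h1 hqr hrn
  · exfalso
    have hz : (t : ℤ) - q = 0 := by omega
    rw [hz, mul_zero, zero_mul, zero_mul] at hsign
    exact lt_irrefl 0 hsign
  · rcases lt_trichotomy r s with h2 | h2 | h2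
    · exact (bkl_comm_disjoint h hq1 hqr h2 hst htn).symm
    · exfalso
      have hz : (s : ℤ) - r = 0 := by omega
      rw [hz, mul_zero, zero_mul] at hsign
      exact lt_irrefl 0 hsign
    · rcases lt_trichotomy q s with h3 | h3 | h3
      · rcases lt_trichotomy t r with h4 | h4 | h4
        · exact bkl_comm_nested h hq1 h3 hst h4 hrn
        · exfalso
          have hz : (t : ℤ) - r = 0 := by omega
          rw [hz, zero_mul, zero_mul, zero_mul] at hsign
          exact lt_irrefl 0 hsign
        · -- interleaved q < s < r < t
          exfalso
          have a1 : (0:ℤ) < (t:ℤ) - r := by omega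
          have a2 : (0:ℤ) < (t:ℤ) - q := by omega
          have a3 : (s:ℤ) - r < 0 := by omega
          have a4 : (0:ℤ) < (s:ℤ) - q := by omega
          nlinarith [mul_pos a1 a2, mul_pos (mul_pos a1 a2) a4]
      · exfalso
        have hz : (s : ℤ) - q = 0 := by omega
        rw [hz, mul_zero] at hsign
        exact lt_irrefl 0 hsign
      · rcases lt_trichotomy r t with h4 | h4 | h4
        · exact (bkl_comm_nested h hs1 h3 hqr h4 htn).symm
        · exfalso
          have hz : (t : ℤ) - r = 0 := by omega
          rw [hz, zero_mul, zero_mul, zero_mul] at hsign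
          exact lt_irrefl 0 hsign
        · -- interleaved s < q < t < r
          exfalso
          have a1 : (t:ℤ) - r < 0 := by omega
          have a2 : (0:ℤ) < (t:ℤ) - q := by omega
          have a3 : (s:ℤ) - r < 0 := by omega
          have a4 : (s:ℤ) - q < 0 := by omega
          nlinarith [mul_pos_of_neg_of_neg a3 a4, mul_neg_of_neg_of_pos a1 a2]
end

section
/- The braid β in B_4 represented by the Artin word σ_3² σ_2 σ_3^{-1} σ_2 σ_3 σ_1^{-1} σ_2 σ_3^{-1} σ_2 σ_1^{-1} is also represented by the BKL word σ_{34} σ_{24} σ_{23} σ_{12}^{-1} σ_{24} σ_{23} σ_{12}^{-1}; in particular β is BKL-homogeneous. -/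
/-- An Artin word: a list of letters `σ_i^{±1}`, recorded as (index, sign). -/
abbrev ArtinWord := List (ℕ × Bool)

/-- A BKL word: a list of letters `σ_{ij}^{±1}`, recorded as ((i,j), sign). -/
abbrev BKLWord := List ((ℕ × ℕ) × Bool)

/-- An Artin word is homogeneous if each generator `σ_i` always occurs
with the same sign. -/
def ArtinWord.Homogeneous (w : ArtinWord) : Prop :=
  ∀ p ∈ w, ∀ q ∈ w, p.1 = q.1 → p.2 = q.2

/-- A BKL word is homogeneous if each generator `σ_{ij}` always occurs
with the same sign. -/
def BKLWord.Homogeneous (w : BKLWord) : Prop :=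
  ∀ p ∈ w, ∀ q ∈ w, p.1 = q.1 → p.2 = q.2

/-- The element of a group represented by an Artin word, given the images
`σ` of the Artin generators. -/
def evalArtin {G : Type*} [Group G] (σ : ℕ → G) (w : ArtinWord) : G :=
  (w.map fun p => if p.2 then σ p.1 else (σ p.1)⁻¹).prod

/-- The element of a group represented by a BKL word, given the images
`σ` of the Artin generators (so `σ_{ij}` is sent to `bkl σ i j`). -/
def evalBKL {G : Type*} [Group G] (σ : ℕ → G) (w : BKLWord) : G :=
  (w.map fun p => if p.2 then bkl σ p.1.1 p.1.2 else (bkl σ p.1.1 p.1.2)⁻¹).prod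

/-- The braid `β ∈ B_4` given by the Artin word
`σ₃² σ₂ σ₃⁻¹ σ₂ σ₃ σ₁⁻¹ σ₂ σ₃⁻¹ σ₂ σ₁⁻¹` is also represented by the BKL word
`σ₃₄ σ₂₄ σ₂₃ σ₁₂⁻¹ σ₂₄ σ₂₃ σ₁₂⁻¹`, which is homogeneous; hence `β` is
BKL-homogeneous.  (Stated in any group with elements satisfying the `B_4`
braid relations.) -/
theorem knot948_braid_is_BKL_homogeneous {G : Type*} [Group G] (σ : ℕ → G)
    (h12 : σ 1 * σ 2 * σ 1 = σ 2 * σ 1 * σ 2)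
    (h23 : σ 2 * σ 3 * σ 2 = σ 3 * σ 2 * σ 3)
    (h13 : σ 1 * σ 3 = σ 3 * σ 1) :
    evalArtin σ [(3, true), (3, true), (2, true), (3, false), (2, true), (3, true),
        (1, false), (2, true), (3, false), (2, true), (1, false)] =
      evalBKL σ [((3, 4), true), ((2, 4), true), ((2, 3), true), ((1, 2), false),
        ((2, 4), true), ((2, 3), true), ((1, 2), false)] ∧
    BKLWord.Homogeneous [((3, 4), true), ((2, 4), true), ((2, 3), true), ((1, 2), false),
        ((2, 4), true), ((2, 3), true), ((1, 2), false)] := by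
  have K1 : σ 3 * σ 2 * (σ 3)⁻¹ = (σ 2)⁻¹ * σ 3 * σ 2 := by
    apply mul_left_cancel (a := σ 2)
    calc σ 2 * (σ 3 * σ 2 * (σ 3)⁻¹) = σ 2 * σ 3 * σ 2 * (σ 3)⁻¹ := by group
      _ = σ 3 * σ 2 * σ 3 * (σ 3)⁻¹ := by rw [h23]
      _ = σ 2 * ((σ 2)⁻¹ * σ 3 * σ 2) := by group
  have K2 : σ 3 * (σ 1)⁻¹ = (σ 1)⁻¹ * σ 3 := by
    apply mul_left_cancel (a := σ 1)
    calc σ 1 * (σ 3 * (σ 1)⁻¹) = σ 1 * σ 3 * (σ 1)⁻¹ := by group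
      _ = σ 3 * σ 1 * (σ 1)⁻¹ := by rw [h13]
      _ = σ 1 * ((σ 1)⁻¹ * σ 3) := by group
  refine ⟨?_, by unfold BKLWord.Homogeneous; decide⟩
  simp only [evalArtin, evalBKL, bkl, artinChain, List.range', List.map, List.prod,
    List.reverse_nil, List.reverse_cons, List.foldr, if_true, if_false, Bool.false_eq_true,
    one_mul, mul_one, inv_one, List.nil_append, List.cons_append]
  norm_num
  calc _ = σ 3 * σ 2 * (σ 3)⁻¹ * σ 2 * σ 3 * (σ 1)⁻¹ * σ 2 * (σ 3)⁻¹ * σ 2 * (σ 1)⁻¹ := by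
        group
    _ = (σ 2)⁻¹ * σ 3 * σ 2 * σ 2 * σ 3 * (σ 1)⁻¹ * σ 2 * (σ 3)⁻¹ * σ 2 * (σ 1)⁻¹ := by
        rw [K1]
    _ = (σ 2)⁻¹ * σ 3 * σ 2 * σ 2 * (σ 3 * (σ 1)⁻¹) * σ 2 * (σ 3)⁻¹ * σ 2 * (σ 1)⁻¹ := by
        group
    _ = (σ 2)⁻¹ * σ 3 * σ 2 * σ 2 * ((σ 1)⁻¹ * σ 3) * σ 2 * (σ 3)⁻¹ * σ 2 * (σ 1)⁻¹ := by
        rw [K2]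
    _ = (σ 2)⁻¹ * σ 3 * σ 2 * σ 2 * (σ 1)⁻¹ * (σ 3 * σ 2 * (σ 3)⁻¹) * σ 2 * (σ 1)⁻¹ := by
        group
    _ = (σ 2)⁻¹ * σ 3 * σ 2 * σ 2 * (σ 1)⁻¹ * ((σ 2)⁻¹ * σ 3 * σ 2) * σ 2 * (σ 1)⁻¹ := by
        rw [K1]
    _ = _ := by group
end
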